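/- Let N ≥ 2 and let φ be an A_N-positive primitive automorphism of the free group F_N. Then there exist an integer k ≥ 1, a generator a ∈ A_N, and pure positive words p, s ∈ F_N such that φ^k(a) = p * a * s, i.e. the reduced word of φ^k(a) is the reduced word of p, followed by the letter a, followed by the reduced word of s, with p and s both nonempty. (Claim used in the paper's construction of the attracting subshift: "the primitivity condition implies that we can find an integer k such that φ^k(a) = p*a*s where p and s are non empty pure positive words".) -/

import Mathlib

/-- A word of the free group is pure positive if its reduced word is nonempty
and all its letters are positive. -/
def PurePos {N : ℕ} (v : FreeGroup (Fin N)) : Prop :=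
  v.toWord ≠ [] ∧ ∀ l ∈ v.toWord, l.2 = true

/-- An automorphism of the free group is `A_N`-positive if the image of each
generator is pure positive. -/
def IsPositive {N : ℕ} (φ : MulAut (FreeGroup (Fin N))) : Prop :=
  ∀ a : Fin N, PurePos (φ (FreeGroup.of a))

/-- An `A_N`-positive automorphism is primitive if some power sends each generator
to a word containing every positive letter. -/
def IsPrimitive {N : ℕ} (φ : MulAut (FreeGroup (Fin N))) : Prop :=
  ∃ k : ℕ, 1 ≤ k ∧ ∀ a b : Fin N, (b, true) ∈ ((φ ^ k) (FreeGroup.of a)).toWord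

/-! Let `ψ = φ ^ k` with `k` from primitivity. Positive automorphisms act on positive words by
letterwise substitution, without cancellation. Each `ψ b` contains two distinct letters, so it has
length at least `2` and `ψ (ψ a)` has at least three letters. In `ψ (ψ (ψ a))` the image of an inner
letter of `ψ (ψ a)` contains `a`, flanked by the nonempty images of its neighbours. -/

open FreeGroup

lemma List.two_le_length_of_mem_of_ne {α : Type*} {L : List α} {x y : α} (hx : x ∈ L) (hy : y ∈ L)
    (hxy : x ≠ y) : 2 ≤ L.length := by
  rcases L with _ | ⟨z, _ | ⟨w, L⟩⟩ <;> simp_all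

namespace FreeGroup

variable {α β : Type*}

theorem isReduced_of_forall_snd {L : List (α × Bool)} (hL : ∀ l ∈ L, l.2 = true) : IsReduced L := by
  refine (List.pairwise_of_forall_mem_list ?_).isChain
  exact fun a ha b hb _ => (hL a ha).trans (hL b hb).symm

section

variable [DecidableEq α]

theorem toWord_mk_of_forall_snd {L : List (α × Bool)} (hL : ∀ l ∈ L, l.2 = true) :
    (mk L).toWord = L := by
  rw [toWord_mk, (isReduced_of_forall_snd hL).reduce_eq]

theorem toWord_mul_of_forall_snd {x y : FreeGroup α} (hx : ∀ l ∈ x.toWord, l.2 = true)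
    (hy : ∀ l ∈ y.toWord, l.2 = true) : (x * y).toWord = x.toWord ++ y.toWord := by
  refine toWord_mul x y ▸ (isReduced_of_forall_snd ?_).reduce_eq
  simp only [List.mem_append]
  rintro l (hl | hl)
  exacts [hx l hl, hy l hl]

end

theorem toWord_map_mk_of_forall_snd [DecidableEq β] (f : FreeGroup α →* FreeGroup β)
    (hf : ∀ a, ∀ l ∈ (f (of a)).toWord, l.2 = true) {L : List (α × Bool)}
    (hL : ∀ l ∈ L, l.2 = true) :
    (f (mk L)).toWord = L.flatMap fun l => (f (of l.1)).toWord := by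
  induction L with
  | nil => simp [← one_eq_mk]
  | cons l L ih =>
    simp only [List.mem_cons, forall_eq_or_imp] at hL
    have hmk : mk (l :: L) = of l.1 * mk L := by
      rw [of, mul_mk, List.singleton_append, ← hL.1]
    have hpos : ∀ m ∈ (f (mk L)).toWord, m.2 = true := by
      simp only [ih hL.2, List.mem_flatMap]
      rintro m ⟨l', -, hm⟩
      exact hf l'.1 m hm
    rw [hmk, _root_.map_mul, toWord_mul_of_forall_snd (hf l.1) hpos, ih hL.2, List.flatMap_cons]

end FreeGroup

section Positive

variable {N : ℕ} {φ ψ : MulAut (FreeGroup (Fin N))}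

theorem purePos_mk {L : List (Fin N × Bool)} (hne : L ≠ []) (hL : ∀ l ∈ L, l.2 = true) :
    PurePos (mk L) := by
  rw [PurePos, toWord_mk_of_forall_snd hL]
  exact ⟨hne, hL⟩

theorem IsPositive.toWord_apply (hφ : IsPositive φ) {w : FreeGroup (Fin N)} (hw : PurePos w) :
    (φ w).toWord = w.toWord.flatMap fun l => (φ (of l.1)).toWord := by
  conv_lhs => rw [← mk_toWord (x := w)]
  exact toWord_map_mk_of_forall_snd φ.toMonoidHom (fun a => (hφ a).2) hw.2

theorem IsPositive.purePos_apply (hφ : IsPositive φ) {w : FreeGroup (Fin N)} (hw : PurePos w) :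
    PurePos (φ w) := by
  rw [PurePos, hφ.toWord_apply hw]
  obtain ⟨l, L, hlL⟩ := List.exists_cons_of_ne_nil hw.1
  refine ⟨by simp [hlL, (hφ l.1).1], ?_⟩
  simp only [List.mem_flatMap]
  rintro m ⟨l', -, hm⟩
  exact (hφ l'.1).2 m hm

theorem IsPositive.mul (hφ : IsPositive φ) (hψ : IsPositive ψ) : IsPositive (φ * ψ) :=
  fun a => hφ.purePos_apply (hψ a)

theorem IsPositive.pow (hφ : IsPositive φ) (n : ℕ) : IsPositive (φ ^ n) := by
  induction n with
  | zero => intro a; simp [PurePos]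
  | succ n ih => rw [pow_succ]; exact ih.mul hφ

theorem IsPositive.length_le_length_apply (hφ : IsPositive φ) {m : ℕ}
    (hm : ∀ a, m ≤ (φ (of a)).toWord.length) {w : FreeGroup (Fin N)} (hw : PurePos w) :
    m * w.toWord.length ≤ (φ w).toWord.length := by
  rw [hφ.toWord_apply hw, List.length_flatMap]
  calc m * w.toWord.length = (w.toWord.map fun _ => m).sum := by simp [mul_comm]
    _ ≤ _ := List.sum_le_sum fun l _ => hm l.1

theorem IsPositive.exists_toWord_apply_eq_sandwich (hφ : IsPositive φ) {a : Fin N}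
    (ha : ∀ b, (a, true) ∈ (φ (of b)).toWord) {w : FreeGroup (Fin N)} (hw : PurePos w)
    (h3 : 3 ≤ w.toWord.length) :
    ∃ p s : FreeGroup (Fin N), PurePos p ∧ PurePos s ∧
      (φ w).toWord = p.toWord ++ [(a, true)] ++ s.toWord := by
  obtain ⟨x, y, z, t, hword⟩ : ∃ x y z t, w.toWord = x :: y :: z :: t := by
    match w.toWord, h3 with
    | x :: y :: z :: t, _ => exact ⟨x, y, z, t, rfl⟩
  set F : Fin N × Bool → List (Fin N × Bool) := fun l => (φ (of l.1)).toWord with hF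
  have hFpos (l : Fin N × Bool) : ∀ m ∈ F l, m.2 = true := (hφ l.1).2
  obtain ⟨u, v, huv⟩ := List.append_of_mem (ha y.1)
  have hpos : ∀ m ∈ F y, m.2 = true := hFpos y
  simp only [hF, huv, List.mem_append, List.mem_cons] at hpos
  have hp : ∀ m ∈ F x ++ u, m.2 = true := by
    simp only [List.mem_append]
    rintro m (hm | hm)
    exacts [hFpos x m hm, hpos m (.inl hm)]
  have hs : ∀ m ∈ v ++ (z :: t).flatMap F, m.2 = true := by
    simp only [List.mem_append, List.mem_flatMap]
    rintro m (hm | ⟨l, -, hm⟩)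
    exacts [hpos m (.inr (.inr hm)), hFpos l m hm]
  refine ⟨mk (F x ++ u), mk (v ++ (z :: t).flatMap F),
    purePos_mk (by simp [hF, (hφ x.1).1]) hp, purePos_mk (by simp [hF, (hφ z.1).1]) hs, ?_⟩
  rw [hφ.toWord_apply hw, hword, toWord_mk_of_forall_snd hp, toWord_mk_of_forall_snd hs]
  simp [hF, huv]

end Positive

/-- For an `A_N`-positive primitive automorphism `φ`, there exist `k ≥ 1`, a
generator `a`, and nonempty pure positive words `p`, `s` with
`φ^k(a) = p * a * s` without cancellation. -/
theorem exists_pow_generator_sandwich {N : ℕ} (hN : 2 ≤ N)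
    (φ : MulAut (FreeGroup (Fin N))) (hpos : IsPositive φ) (hprim : IsPrimitive φ) :
    ∃ (k : ℕ) (a : Fin N) (p s : FreeGroup (Fin N)), 1 ≤ k ∧
      PurePos p ∧ PurePos s ∧
      ((φ ^ k) (FreeGroup.of a)).toWord = p.toWord ++ [(a, true)] ++ s.toWord := by
  obtain ⟨k, hk, hall⟩ := hprim
  have hψ : IsPositive (φ ^ k) := hpos.pow k
  have : Nontrivial (Fin N) := Fin.nontrivial_iff_two_le.mpr hN
  obtain ⟨a, b, hab⟩ := exists_pair_ne (Fin N)
  have hlen (c : Fin N) : 2 ≤ ((φ ^ k) (of c)).toWord.length :=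
    List.two_le_length_of_mem_of_ne (hall c a) (hall c b) (by simpa using hab)
  have h3 : 3 ≤ ((φ ^ k) ((φ ^ k) (of a))).toWord.length := by
    have := hψ.length_le_length_apply hlen (hψ a)
    have := hlen a
    omega
  obtain ⟨p, s, hp, hs, hps⟩ :=
    hψ.exists_toWord_apply_eq_sandwich (hall · a) (hψ.purePos_apply (hψ a)) h3
  refine ⟨k * 3, a, p, s, by omega, hp, hs, ?_⟩
  rwa [pow_mul, pow_succ, pow_two, MulAut.mul_apply, MulAut.mul_apply]
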